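/- For an almost Courant-Dorfman algebra, the differential of the canonical 3-cochain Θ is given by: (dΘ)₀(e₁,e₂,e₃,e₄) = 2⟨[e₁,[e₂,e₃]] − [[e₁,e₂],e₃] − [e₂,[e₁,e₃]], e₄⟩, (dΘ)₁(e₁,e₂;f) = 2⟨[∂f,e₁], e₂⟩, and −(dΘ)₂(f₁,f₂) = 2⟨∂f₁, ∂f₂⟩. Consequently, if the almost Courant-Dorfman structure is a Courant-Dorfman structure (axioms (4),(5),(6) hold), then dΘ = 0. -/
import Mathlib


/-- An almost Courant-Dorfman algebra: only axioms (1), (2), (3) of the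
Courant-Dorfman definition are required. -/
structure AlmostCourantDorfman (K R E : Type*) [CommRing K] [CommRing R] [Algebra K R]
    [AddCommGroup E] [Module K E] [Module R E] [IsScalarTower K R E] where
  inner : E →ₗ[R] E →ₗ[R] R
  inner_symm : ∀ e₁ e₂ : E, inner e₁ e₂ = inner e₂ e₁
  par : Derivation K R E
  brk : E →ₗ[K] E →ₗ[K] E
  ax1 : ∀ (e₁ e₂ : E) (f : R), brk e₁ (f • e₂) = f • brk e₁ e₂ + inner e₁ (par f) • e₂
  ax2 : ∀ e₁ e₂ e₃ : E,
    inner e₁ (par (inner e₂ e₃)) = inner (brk e₁ e₂) e₃ + inner e₂ (brk e₁ e₃)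
  ax3 : ∀ e₁ e₂ : E, brk e₁ e₂ + brk e₂ e₁ = par (inner e₁ e₂)

variable {K R E : Type*} [CommRing K] [CommRing R] [Algebra K R] [Invertible (2 : K)]
  [AddCommGroup E] [Module K E] [Module R E] [IsScalarTower K R E]


lemma AlmostCourantDorfman.inner_ax3_left (C : AlmostCourantDorfman K R E) (a c w : E) :
    C.inner (C.brk a c) w + C.inner (C.brk c a) w = C.inner (C.par (C.inner a c)) w := by
  rw [← C.ax3]; simp

lemma AlmostCourantDorfman.inner_ax3_right (C : AlmostCourantDorfman K R E) (w a c : E) :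
    C.inner w (C.brk a c) + C.inner w (C.brk c a) = C.inner w (C.par (C.inner a c)) := by
  rw [← C.ax3, map_add]

lemma AlmostCourantDorfman.psymR (C : AlmostCourantDorfman K R E) (w a c : E) :
    C.inner w (C.par (C.inner a c)) = C.inner w (C.par (C.inner c a)) := by
  rw [C.inner_symm a c]

/-- `Θ₀(e₁,e₂,e₃) = ⟨[e₁,e₂],e₃⟩`. -/
def AlmostCourantDorfman.Theta0 (C : AlmostCourantDorfman K R E) (e₁ e₂ e₃ : E) : R :=
  C.inner (C.brk e₁ e₂) e₃

/-- `Θ₁(e;f) = −ρ(e)f = −⟨e,∂f⟩`. -/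
def AlmostCourantDorfman.Theta1 (C : AlmostCourantDorfman K R E) (e : E) (f : R) : R :=
  -(C.inner e (C.par f))

/-- `(dΘ)₀(e₁,e₂,e₃,e₄)`, by the standard-complex differential formula. -/
def AlmostCourantDorfman.dTheta0 (C : AlmostCourantDorfman K R E) (e₁ e₂ e₃ e₄ : E) : R :=
  C.inner e₁ (C.par (C.Theta0 e₂ e₃ e₄)) - C.inner e₂ (C.par (C.Theta0 e₁ e₃ e₄))
    + C.inner e₃ (C.par (C.Theta0 e₁ e₂ e₄)) - C.inner e₄ (C.par (C.Theta0 e₁ e₂ e₃))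
    - C.Theta0 (C.brk e₁ e₂) e₃ e₄ - C.Theta0 e₂ (C.brk e₁ e₃) e₄
    - C.Theta0 e₂ e₃ (C.brk e₁ e₄) + C.Theta0 e₁ (C.brk e₂ e₃) e₄
    + C.Theta0 e₁ e₃ (C.brk e₂ e₄) - C.Theta0 e₁ e₂ (C.brk e₃ e₄)

/-- `(dΘ)₁(e₁,e₂;f)`, by the standard-complex differential formula. -/
def AlmostCourantDorfman.dTheta1 (C : AlmostCourantDorfman K R E) (e₁ e₂ : E) (f : R) : R :=
  C.Theta0 (C.par f) e₁ e₂ + C.inner e₁ (C.par (C.Theta1 e₂ f))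
    - C.inner e₂ (C.par (C.Theta1 e₁ f)) - C.Theta1 (C.brk e₁ e₂) f

/-- `(dΘ)₂(f₁,f₂)`, by the standard-complex differential formula. -/
def AlmostCourantDorfman.dTheta2 (C : AlmostCourantDorfman K R E) (f₁ f₂ : R) : R :=
  C.Theta1 (C.par f₁) f₂ + C.Theta1 (C.par f₂) f₁

/-- The differential of the canonical cochain `Θ` of an almost Courant-Dorfman
algebra is given by the stated formulas; hence if axioms (4), (5), (6) hold
(so that the structure is a Courant-Dorfman algebra), `dΘ = 0`. -/
theorem almostCourantDorfman_dTheta (C : AlmostCourantDorfman K R E) :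
    (∀ e₁ e₂ e₃ e₄ : E,
      C.dTheta0 e₁ e₂ e₃ e₄
        = 2 * C.inner (C.brk e₁ (C.brk e₂ e₃) - C.brk (C.brk e₁ e₂) e₃
            - C.brk e₂ (C.brk e₁ e₃)) e₄) ∧
    (∀ (e₁ e₂ : E) (f : R),
      C.dTheta1 e₁ e₂ f = 2 * C.inner (C.brk (C.par f) e₁) e₂) ∧
    (∀ f₁ f₂ : R, -(C.dTheta2 f₁ f₂) = 2 * C.inner (C.par f₁) (C.par f₂)) ∧
    ((∀ e₁ e₂ e₃ : E, C.brk e₁ (C.brk e₂ e₃)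
          = C.brk (C.brk e₁ e₂) e₃ + C.brk e₂ (C.brk e₁ e₃)) →
      (∀ (f : R) (e : E), C.brk (C.par f) e = 0) →
      (∀ f g : R, C.inner (C.par f) (C.par g) = 0) →
      (∀ e₁ e₂ e₃ e₄ : E, C.dTheta0 e₁ e₂ e₃ e₄ = 0) ∧
      (∀ (e₁ e₂ : E) (f : R), C.dTheta1 e₁ e₂ f = 0) ∧
      (∀ f₁ f₂ : R, C.dTheta2 f₁ f₂ = 0)) := by
  have H0 : ∀ e₁ e₂ e₃ e₄ : E,
      C.dTheta0 e₁ e₂ e₃ e₄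
        = 2 * C.inner (C.brk e₁ (C.brk e₂ e₃) - C.brk (C.brk e₁ e₂) e₃
            - C.brk e₂ (C.brk e₁ e₃)) e₄ := by
    intro e₁ e₂ e₃ e₄
    simp only [AlmostCourantDorfman.dTheta0, AlmostCourantDorfman.Theta0, map_sub,
      LinearMap.sub_apply]
    linear_combination C.ax2 e₁ (C.brk e₂ e₃) e₄ - C.ax2 e₂ (C.brk e₁ e₃) e₄
      + C.ax2 e₃ (C.brk e₁ e₂) e₄ + C.inner_ax3_left e₃ (C.brk e₁ e₂) e₄
      + C.inner_symm (C.par (C.inner e₃ (C.brk e₁ e₂))) e₄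
      + C.psymR e₄ e₃ (C.brk e₁ e₂)
  have H1 : ∀ (e₁ e₂ : E) (f : R),
      C.dTheta1 e₁ e₂ f = 2 * C.inner (C.brk (C.par f) e₁) e₂ := by
    intro e₁ e₂ f
    simp only [AlmostCourantDorfman.dTheta1, AlmostCourantDorfman.Theta0,
      AlmostCourantDorfman.Theta1, map_neg]
    linear_combination C.ax2 e₂ e₁ (C.par f) + C.ax2 (C.par f) e₁ e₂
      + C.inner_ax3_right (C.par f) e₁ e₂ + C.inner_ax3_right e₁ e₂ (C.par f)
      + C.inner_symm (C.brk e₁ e₂) (C.par f) + C.inner_symm (C.brk e₂ e₁) (C.par f)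
  have H2 : ∀ f₁ f₂ : R, -(C.dTheta2 f₁ f₂) = 2 * C.inner (C.par f₁) (C.par f₂) := by
    intro f₁ f₂
    simp only [AlmostCourantDorfman.dTheta2, AlmostCourantDorfman.Theta1]
    linear_combination C.inner_symm (C.par f₂) (C.par f₁)
  refine ⟨H0, H1, H2, fun ax4 ax5 ax6 => ⟨?_, ?_, ?_⟩⟩
  · intro e₁ e₂ e₃ e₄
    rw [H0]
    have : C.brk e₁ (C.brk e₂ e₃) - C.brk (C.brk e₁ e₂) e₃ - C.brk e₂ (C.brk e₁ e₃) = 0 := by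
      rw [ax4 e₁ e₂ e₃]; abel
    rw [this]; simp
  · intro e₁ e₂ f
    rw [H1, ax5]; simp
  · intro f₁ f₂
    have := H2 f₁ f₂
    rw [ax6] at this
    linear_combination -this
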